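/- arXiv:math/0110267 — 3 statements merged into one kernel-verified Lean document; each statement's English description precedes it below -/
import Mathlib

section
/- If A is a liminal C*-algebra, then every primitive ideal of A is a maximal closed two-sided ideal of A. -/
/-!
Let `π` be an irreducible representation with `π(A) = K(H)` and let `J ⊋ ker π` be a closed ideal.
Choosing `a ∈ J` with `π a ≠ 0`, every rank-one operator factors as `R₁ π(a) R₂` with `R₁, R₂`
rank-one, so `π(J)` contains all finite sums of rank-one operators. Since `J` is closed and
saturated for `π`, the open mapping theorem applied to `π : A → K(H)` shows that `π(J)` is closed,
hence it contains the compact operators, which are norm limits of such sums (project onto the span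
of a finite `ε`-net of the image of the unit ball). Thus `π(J) = π(A)`, and `J = A` because
`J ⊇ ker π`.
-/

universe u

/-- A `⋆`-representation of a C⋆-algebra `A` on a complex Hilbert space. -/
structure CStarRep (A : Type u) [NonUnitalCStarAlgebra A] : Type (u + 1) where
  /-- The underlying Hilbert space of the representation. -/
  carrier : Type u
  [normedAddCommGroup : NormedAddCommGroup carrier]
  [innerProductSpace : InnerProductSpace ℂ carrier]
  [completeSpace : CompleteSpace carrier]
  /-- The `⋆`-homomorphism into the bounded operators. -/
  toFun : A →⋆ₙₐ[ℂ] (carrier →L[ℂ] carrier)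

attribute [instance] CStarRep.normedAddCommGroup CStarRep.innerProductSpace CStarRep.completeSpace

/-- A representation is (topologically) irreducible if it is nonzero and the only closed
subspaces of `H` invariant under `π(A)` are `0` and `H`. -/
def CStarRep.IsIrreducible {A : Type u} [NonUnitalCStarAlgebra A] (π : CStarRep A) : Prop :=
  π.toFun ≠ 0 ∧
    ∀ K : Submodule ℂ π.carrier, IsClosed (K : Set π.carrier) →
      (∀ a : A, ∀ x ∈ K, π.toFun a x ∈ K) → K = ⊥ ∨ K = ⊤

/-- The kernel of a representation, as a subset of `A`. -/
def CStarRep.ker {A : Type u} [NonUnitalCStarAlgebra A] (π : CStarRep A) : Set A :=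
  {a : A | π.toFun a = 0}

/-- A primitive ideal is the kernel of an irreducible `⋆`-representation. -/
def IsPrimitiveIdeal {A : Type u} [NonUnitalCStarAlgebra A] (I : Set A) : Prop :=
  ∃ π : CStarRep A, π.IsIrreducible ∧ π.ker = I

/-- The primitive ideal space `Prim(A)` of a C⋆-algebra `A`. -/
def PrimSpace (A : Type u) [NonUnitalCStarAlgebra A] : Type u :=
  {I : Set A // IsPrimitiveIdeal I}

/-- The hull-kernel (Jacobson) topology on `Prim(A)`: the open sets are generated by the sets
`U_J = {P ∈ Prim(A) : J ⊄ P}`; equivalently, the closure of `W ⊆ Prim(A)` is the set of all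
primitive ideals containing `⋂ W`. -/
instance (A : Type u) [NonUnitalCStarAlgebra A] : TopologicalSpace (PrimSpace A) :=
  TopologicalSpace.generateFrom {U | ∃ J : Set A, U = {P : PrimSpace A | ¬ J ⊆ P.1}}

/-- A C⋆-algebra is liminal if every irreducible representation maps onto exactly the compact
operators: `π(A) = K(H)`. -/
def IsLiminal (A : Type u) [NonUnitalCStarAlgebra A] : Prop :=
  ∀ π : CStarRep A, π.IsIrreducible →
    Set.range ⇑π.toFun = {T : π.carrier →L[ℂ] π.carrier | IsCompactOperator T}

open scoped InnerProductSpace CStarAlgebra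
open InnerProductSpace Metric Set Topology

section RankOne

variable {𝕜 E : Type*} [RCLike 𝕜] [NormedAddCommGroup E] [InnerProductSpace 𝕜 E]

theorem isCompactOperator_rankOne {F : Type*} [NormedAddCommGroup F] [InnerProductSpace 𝕜 F]
    (x : E) (y : F) : IsCompactOperator (rankOne 𝕜 x y) := by
  rw [rankOne_def']
  exact (isCompactOperator_of_locallyCompactSpace_rng
    (ContinuousLinearMap.toSpanSingleton 𝕜 x)).comp_clm (innerSL 𝕜 y)

theorem rankOne_mul_mul_rankOne (u w x v : E) (S : E →L[𝕜] E) :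
    rankOne 𝕜 u w * S * rankOne 𝕜 x v = ⟪w, S x⟫_𝕜 • rankOne 𝕜 u v := by
  simp [ContinuousLinearMap.mul_def, comp_rankOne]

theorem Submodule.norm_sub_starProjection_le {U : Submodule 𝕜 E} [U.HasOrthogonalProjection]
    (y : E) {c : E} (hc : c ∈ U) : ‖y - U.starProjection y‖ ≤ ‖y - c‖ := by
  rw [starProjection_minimal]
  exact ciInf_le ⟨0, by rintro _ ⟨_, rfl⟩; positivity⟩ (⟨c, hc⟩ : U)

variable (𝕜 E) in
def rankOneSums : AddSubmonoid (E →L[𝕜] E) :=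
  AddSubmonoid.closure (range fun p : E × E => rankOne 𝕜 p.1 p.2)

theorem IsCompactOperator.exists_norm_sub_starProjection_comp_le {T : E →L[𝕜] E}
    (hT : IsCompactOperator T) {ε : ℝ} (hε : 0 < ε) :
    ∃ (U : Submodule 𝕜 E) (_ : FiniteDimensional 𝕜 U), ‖T - U.starProjection ∘L T‖ ≤ ε := by
  obtain ⟨t, htfin, hcov⟩ := totallyBounded_iff.mp
    ((hT.isCompact_closure_image_closedBall 1).totallyBounded.subset subset_closure) ε hε
  have := FiniteDimensional.span_of_finite 𝕜 htfin
  refine ⟨Submodule.span 𝕜 t, this, ?_⟩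
  refine ContinuousLinearMap.opNorm_le_of_unit_norm hε.le fun x hx => ?_
  obtain ⟨c, hct, hc⟩ : ∃ c ∈ t, T x ∈ ball c ε := by
    simpa using hcov ⟨x, by simp [hx], rfl⟩
  calc ‖(T - (Submodule.span 𝕜 t).starProjection ∘L T) x‖
      = ‖T x - (Submodule.span 𝕜 t).starProjection (T x)‖ := rfl
    _ ≤ ‖T x - c‖ := Submodule.norm_sub_starProjection_le _ (Submodule.subset_span hct)
    _ ≤ ε := (mem_ball_iff_norm.mp hc).le

variable [CompleteSpace E]

theorem starProjection_comp_mem_rankOneSums (U : Submodule 𝕜 E) [FiniteDimensional 𝕜 U]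
    (T : E →L[𝕜] E) : U.starProjection ∘L T ∈ rankOneSums 𝕜 E := by
  rw [(stdOrthonormalBasis 𝕜 U).starProjection_eq_sum_rankOne, ContinuousLinearMap.finsetSum_comp]
  exact sum_mem fun i _ => AddSubmonoid.subset_closure
    ⟨(_, ContinuousLinearMap.adjoint T _), (rankOne_comp _ _ T).symm⟩

theorem IsCompactOperator.mem_closure_rankOneSums {T : E →L[𝕜] E} (hT : IsCompactOperator T) :
    T ∈ closure (rankOneSums 𝕜 E : Set (E →L[𝕜] E)) := by
  refine Metric.mem_closure_iff.mpr fun ε hε => ?_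
  obtain ⟨U, _, hU⟩ := hT.exists_norm_sub_starProjection_comp_le (half_pos hε)
  exact ⟨_, starProjection_comp_mem_rankOneSums U T,
    (dist_eq_norm T _).trans_lt (hU.trans_lt (half_lt_self hε))⟩

end RankOne

theorem ContinuousLinearMap.isClosed_image_of_isClosed_range {𝕜 E F : Type*}
    [NontriviallyNormedField 𝕜] [NormedAddCommGroup E] [NormedSpace 𝕜 E] [CompleteSpace E]
    [NormedAddCommGroup F] [NormedSpace 𝕜 F] [CompleteSpace F] (f : E →L[𝕜] F)
    (hf : IsClosed (range f)) {s : Set E} (hs : IsClosed s) (hsat : f ⁻¹' (f '' s) = s) :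
    IsClosed (f '' s) := by
  have hrange : IsClosed ((LinearMap.range (f : E →ₗ[𝕜] F) : Submodule 𝕜 F) : Set F) := by
    rwa [LinearMap.coe_range, ContinuousLinearMap.coe_coe]
  have := hrange.completeSpace_coe
  have hg : IsQuotientMap f.rangeRestrict :=
    f.rangeRestrict.isQuotientMap rangeFactorization_surjective
  have himage : f '' s = Subtype.val '' (f.rangeRestrict '' s) := by
    rw [Set.image_image]; rfl
  have hsat' : f.rangeRestrict ⁻¹' (f.rangeRestrict '' s) = s := by
    refine Set.Subset.antisymm (fun x ⟨y, hy, hxy⟩ => ?_) (subset_preimage_image _ _)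
    exact hsat ▸ ⟨y, hy, congrArg Subtype.val hxy⟩
  rw [himage]
  exact hrange.isClosedMap_subtype_val _ (hg.isClosed_preimage.mp (hsat'.symm ▸ hs))

theorem TwoSidedIdeal.preimage_image_eq_of_ker_le {R S F : Type*} [NonUnitalNonAssocRing R]
    [NonUnitalNonAssocRing S] [FunLike F R S] [NonUnitalRingHomClass F R S] (f : F)
    {J : TwoSidedIdeal R} (hJ : ker f ≤ J) : f ⁻¹' (f '' J) = J := by
  refine Subset.antisymm (fun x ⟨j, hj, hjx⟩ => ?_) (subset_preimage_image _ _)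
  have hxj : x - j ∈ J := hJ ((mem_ker f).mpr (by rw [map_sub, hjx, sub_self]))
  simpa using J.add_mem hxj hj

section RankOneIdeal

variable {R 𝕜 E F : Type*} [NonUnitalRing R] [RCLike 𝕜] [NormedAddCommGroup E]
  [InnerProductSpace 𝕜 E] [FunLike F R (E →L[𝕜] E)] [NonUnitalRingHomClass F R (E →L[𝕜] E)]
  {f : F} {J : TwoSidedIdeal R}

theorem TwoSidedIdeal.rankOne_mem_image_of_not_le_ker
    (hrange : ∀ x y : E, rankOne 𝕜 x y ∈ range f) (hJ : ¬ J ≤ ker f) (u v : E) :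
    rankOne 𝕜 u v ∈ f '' J := by
  obtain ⟨a, haJ, ha⟩ := SetLike.not_le_iff_exists.mp hJ
  obtain ⟨x, hx⟩ : ∃ x, f a x ≠ 0 := by
    by_contra! h
    exact ha ((mem_ker f).mpr (ContinuousLinearMap.ext h))
  have hc : ⟪f a x, f a x⟫_𝕜 ≠ 0 := inner_self_ne_zero.mpr hx
  obtain ⟨b₁, hb₁⟩ := hrange ((⟪f a x, f a x⟫_𝕜)⁻¹ • u) (f a x)
  obtain ⟨b₂, hb₂⟩ := hrange x v
  refine ⟨b₁ * a * b₂, J.mul_mem_right _ _ (J.mul_mem_left _ _ haJ), ?_⟩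
  rw [map_mul, map_mul, hb₁, hb₂, rankOne_mul_mul_rankOne, map_smul,
    _root_.smul_apply, smul_smul, mul_inv_cancel₀ hc, one_smul]

theorem TwoSidedIdeal.rankOneSums_subset_image_of_not_le_ker
    (hrange : ∀ x y : E, rankOne 𝕜 x y ∈ range f) (hJ : ¬ J ≤ ker f) :
    (rankOneSums 𝕜 E : Set (E →L[𝕜] E)) ⊆ f '' J := by
  have : rankOneSums 𝕜 E ≤ (AddSubmonoid.ofClass J).map (f : R →+ E →L[𝕜] E) := by
    refine AddSubmonoid.closure_le.mpr ?_
    rintro _ ⟨⟨u, v⟩, rfl⟩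
    exact rankOne_mem_image_of_not_le_ker hrange hJ u v
  exact fun _ hT => this hT

end RankOneIdeal

theorem TwoSidedIdeal.coe_eq_univ_of_ker_lt {A H : Type*} [NonUnitalCStarAlgebra A]
    [NormedAddCommGroup H] [InnerProductSpace ℂ H] [CompleteSpace H]
    (φ : A →⋆ₙₐ[ℂ] (H →L[ℂ] H)) (hφ : range φ = {T : H →L[ℂ] H | IsCompactOperator T})
    {J : TwoSidedIdeal A} (hJc : IsClosed (J : Set A)) (hJ : ker φ < J) :
    (J : Set A) = univ := by
  have hsat := preimage_image_eq_of_ker_le φ hJ.le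
  have hclosed : IsClosed (φ '' J) :=
    (⟨φ, map_continuous φ⟩ : A →L[ℂ] (H →L[ℂ] H)).isClosed_image_of_isClosed_range
      (hφ ▸ isClosed_setOfPred_isCompactOperator) hJc hsat
  have hrange : range φ ⊆ φ '' J := by
    rw [hφ]
    have hsums := rankOneSums_subset_image_of_not_le_ker
      (fun x y => hφ ▸ isCompactOperator_rankOne x y) hJ.not_ge
    exact fun T hT => closure_minimal hsums hclosed hT.mem_closure_rankOneSums
  rw [← hsat]
  exact eq_univ_of_forall fun a => hrange ⟨a, rfl⟩

namespace CStarRep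

variable {A : Type u} [NonUnitalCStarAlgebra A]

theorem coe_ker_toFun (π : CStarRep A) : (TwoSidedIdeal.ker π.toFun : Set A) = π.ker :=
  Set.ext fun _ => TwoSidedIdeal.mem_ker _

theorem isClosed_ker (π : CStarRep A) : IsClosed π.ker :=
  isClosed_singleton.preimage (map_continuous π.toFun)

theorem IsIrreducible.ker_ne_univ {π : CStarRep A} (hπ : π.IsIrreducible) : π.ker ≠ univ :=
  fun h => hπ.1 (NonUnitalStarAlgHom.ext fun a => (h ▸ mem_univ a : a ∈ π.ker))

end CStarRep

/-- If `A` is a liminal C⋆-algebra, then every primitive ideal of `A` is a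
maximal closed two-sided ideal: it is a proper closed two-sided ideal, and it is maximal among
proper closed two-sided ideals of `A`. -/
theorem primitiveIdeal_isMaximalClosed_of_isLiminal {A : Type u} [NonUnitalCStarAlgebra A]
    (hA : IsLiminal A) (I : Set A) (hI : IsPrimitiveIdeal I) :
    (∃ J : TwoSidedIdeal A, (J : Set A) = I) ∧ IsClosed I ∧ I ≠ Set.univ ∧
      ∀ J : TwoSidedIdeal A, IsClosed (J : Set A) → (J : Set A) ≠ Set.univ →
        I ⊆ (J : Set A) → (J : Set A) = I := by
  obtain ⟨π, hπ, rfl⟩ := hI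
  refine ⟨⟨_, π.coe_ker_toFun⟩, π.isClosed_ker, hπ.ker_ne_univ, fun J hJc hJp hJ => ?_⟩
  by_contra hne
  refine hJp (TwoSidedIdeal.coe_eq_univ_of_ker_lt π.toFun (hA π hπ) hJc (lt_of_le_of_ne ?_ ?_))
  · rwa [TwoSidedIdeal.le_iff, π.coe_ker_toFun]
  · rintro rfl
    exact hne π.coe_ker_toFun
end

section
/- Let A be a postliminal C*-algebra. If π₁ and π₂ are irreducible *-representations of A with the same kernel, then π₁ and π₂ are unitarily equivalent. -/
universe u

/-- A C⋆-algebra is postliminal if every irreducible representation contains the compact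
operators in its range: `K(H) ⊆ π(A)`. -/
def IsPostliminal (A : Type u) [NonUnitalCStarAlgebra A] : Prop :=
  ∀ π : CStarRep A, π.IsIrreducible →
    ∀ T : π.carrier →L[ℂ] π.carrier, IsCompactOperator T → T ∈ Set.range ⇑π.toFun

/-!
Pick a unit vector `ξ ∈ H₁`. By postliminality the rank-one projection onto `ℂ ξ` is `π₁(e)` for
some `e ∈ A`, and `π₁(e a e) = ⟪ξ, π₁(a) ξ⟫ π₁(e)`. Since the kernels agree, the same identities
hold for `π₂(e)`, which is therefore a nonzero projection compressing `π₂(a)` to the same scalar;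
any unit vector `η` in its range has the same vector state as `ξ`. Both vectors are cyclic by
irreducibility, so uniqueness of the GNS construction gives the unitary `π₁(a) ξ ↦ π₂(a) η`.
-/

open InnerProductSpace

section RankOne

variable {𝕜 H : Type*} [RCLike 𝕜] [NormedAddCommGroup H] [InnerProductSpace 𝕜 H]

theorem isCompactOperator_rankOne_s14 (x y : H) : IsCompactOperator (rankOne 𝕜 x y) :=
  (isCompactOperator_of_locallyCompactSpace_dom (innerSL 𝕜 y)).clm_comp
    (ContinuousLinearMap.toSpanSingleton 𝕜 x)

theorem rankOne_mul_mul_rankOne_s14 (x y z w : H) (T : H →L[𝕜] H) :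
    rankOne 𝕜 x y * T * rankOne 𝕜 z w = inner 𝕜 y (T z) • rankOne 𝕜 x w := by
  ext v
  simp [smul_smul, mul_comm]

theorem inner_apply_eq_of_mul_mul_eq_smul [CompleteSpace H] {q T : H →L[𝕜] H} {c : 𝕜}
    (hq : IsSelfAdjoint q) (hqTq : q * T * q = c • q) {η : H} (hη : ‖η‖ = 1) (hqη : q η = η) :
    inner 𝕜 η (T η) = c := by
  calc inner 𝕜 η (T η) = inner 𝕜 (q η) (T (q η)) := by rw [hqη]
    _ = inner 𝕜 η ((q * T * q) η) := by
        rw [← ContinuousLinearMap.adjoint_inner_right, ← ContinuousLinearMap.star_eq_adjoint,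
          hq.star_eq]
        rfl
    _ = c := by rw [hqTq, smul_apply, hqη, inner_smul_right, inner_self_eq_norm_sq_to_K, hη]; simp

end RankOne

theorem IsIdempotentElem.exists_norm_eq_one_apply_eq {𝕜 E : Type*} [RCLike 𝕜]
    [NormedAddCommGroup E] [NormedSpace 𝕜 E] {q : E →L[𝕜] E} (hq : IsIdempotentElem q)
    (hq₀ : q ≠ 0) : ∃ η : E, ‖η‖ = 1 ∧ q η = η := by
  obtain ⟨y, hy⟩ : ∃ y, q y ≠ 0 := by simpa [ContinuousLinearMap.ext_iff] using hq₀
  refine ⟨(‖q y‖⁻¹ : 𝕜) • q y, norm_smul_inv_norm hy, ?_⟩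
  rw [map_smul, ← mul_apply_eq_comp, hq.eq]

namespace CStarRep

variable {A : Type u} [NonUnitalCStarAlgebra A]

@[simps]
noncomputable def evalₗ (π : CStarRep A) (ξ : π.carrier) : A →ₗ[ℂ] π.carrier where
  toFun a := π.toFun a ξ
  map_add' a b := by simp only [map_add, add_apply]
  map_smul' c a := by simp only [map_smul, smul_apply, RingHom.id_apply]

def IsCyclicVector (π : CStarRep A) (ξ : π.carrier) : Prop :=
  DenseRange (π.evalₗ ξ)

theorem IsIrreducible.nontrivial {π : CStarRep A} (h : π.IsIrreducible) :
    Nontrivial π.carrier := by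
  by_contra hH
  rw [not_nontrivial_iff_subsingleton] at hH
  exact h.1 (by ext; exact Subsingleton.elim _ _)

theorem IsIrreducible.eq_zero_of_forall_apply_eq_zero {π : CStarRep A} (h : π.IsIrreducible)
    {ξ : π.carrier} (hξ : ∀ a, π.toFun a ξ = 0) : ξ = 0 := by
  let N : Submodule ℂ π.carrier := ⨅ a : A, LinearMap.ker (π.toFun a).toLinearMap
  have hN : (N : Set π.carrier) = ⋂ a, {x | π.toFun a x = 0} := by
    ext; simp [N]
  have hN_closed : IsClosed (N : Set π.carrier) := by
    rw [hN]; exact isClosed_iInter fun a ↦ isClosed_eq (π.toFun a).continuous continuous_const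
  have hN_invariant : ∀ a, ∀ x ∈ N, π.toFun a x ∈ N := by
    simp only [← SetLike.mem_coe, hN, Set.mem_iInter, Set.mem_ofPred_eq]
    intro a x hx b
    rw [← mul_apply_eq_comp, ← map_mul]
    exact hx (b * a)
  rcases h.2 N hN_closed hN_invariant with hbot | htop
  · have : ξ ∈ N := by simpa [← SetLike.mem_coe, hN] using hξ
    simpa [hbot] using this
  · refine absurd ?_ h.1
    ext a x
    have : x ∈ N := htop ▸ Submodule.mem_top
    simp only [N, Submodule.mem_iInf] at this
    exact this a

theorem IsIrreducible.isCyclicVector {π : CStarRep A} (h : π.IsIrreducible) {ξ : π.carrier}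
    (hξ : ξ ≠ 0) : π.IsCyclicVector ξ := by
  let K := (LinearMap.range (π.evalₗ ξ)).topologicalClosure
  have hK_invariant : ∀ a, ∀ x ∈ K, π.toFun a x ∈ K := by
    intro a x hx
    refine Set.MapsTo.closure (f := π.toFun a) ?_ (π.toFun a).continuous hx
    rintro - ⟨b, rfl⟩
    exact ⟨a * b, by simp⟩
  rcases h.2 K (Submodule.isClosed_topologicalClosure _) hK_invariant with hbot | htop
  · refine absurd (h.eq_zero_of_forall_apply_eq_zero fun a ↦ ?_) hξ
    have : π.evalₗ ξ a ∈ K := Submodule.le_topologicalClosure _ (LinearMap.mem_range_self _ a)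
    simpa [hbot] using this
  · exact Submodule.dense_iff_topologicalClosure_eq_top.2 htop

theorem inner_apply_self (π : CStarRep A) (a : A) (ξ : π.carrier) :
    inner ℂ (π.toFun a ξ) (π.toFun a ξ) = inner ℂ ξ (π.toFun (star a * a) ξ) := by
  rw [map_mul, map_star, mul_apply_eq_comp, ContinuousLinearMap.star_eq_adjoint,
    ContinuousLinearMap.adjoint_inner_right]

theorem norm_apply_eq_of_inner_eq {π₁ π₂ : CStarRep A} {ξ : π₁.carrier} {η : π₂.carrier}
    (h : ∀ a, inner ℂ ξ (π₁.toFun a ξ) = inner ℂ η (π₂.toFun a η)) (a : A) :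
    ‖π₁.toFun a ξ‖ = ‖π₂.toFun a η‖ := by
  have := π₁.inner_apply_self a ξ ▸ π₂.inner_apply_self a η ▸ h (star a * a)
  rw [inner_self_eq_norm_sq_to_K, inner_self_eq_norm_sq_to_K] at this
  exact (pow_left_inj₀ (norm_nonneg _) (norm_nonneg _) two_ne_zero).1 (by exact_mod_cast this)

theorem exists_linearIsometryEquiv_intertwining_of_inner_eq {π₁ π₂ : CStarRep A}
    {ξ : π₁.carrier} {η : π₂.carrier} (hξ : π₁.IsCyclicVector ξ) (hη : π₂.IsCyclicVector η)
    (h : ∀ a, inner ℂ ξ (π₁.toFun a ξ) = inner ℂ η (π₂.toFun a η)) :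
    ∃ U : π₁.carrier ≃ₗᵢ[ℂ] π₂.carrier, ∀ a x, U (π₁.toFun a x) = π₂.toFun a (U x) := by
  let U := (LinearEquiv.refl ℂ A).extendOfIsometry (π₁.evalₗ ξ) (π₂.evalₗ η) hξ hη
    fun a ↦ (norm_apply_eq_of_inner_eq h a).symm
  have hU (b : A) : U (π₁.toFun b ξ) = π₂.toFun b η :=
    LinearEquiv.extendOfIsometry_eq _ _ _ hξ hη _ b
  refine ⟨U, fun a ↦ congrFun (hξ.equalizer (by fun_prop) (by fun_prop) (funext fun b ↦ ?_))⟩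
  simp only [Function.comp_apply, evalₗ_apply, ← mul_apply_eq_comp, ← map_mul, hU]

theorem toFun_eq_toFun_iff_of_ker_eq {π₁ π₂ : CStarRep A} (hker : π₁.ker = π₂.ker) {a b : A} :
    π₁.toFun a = π₁.toFun b ↔ π₂.toFun a = π₂.toFun b := by
  rw [← sub_eq_zero, ← map_sub, ← sub_eq_zero (a := π₂.toFun a), ← map_sub]
  exact Set.ext_iff.1 hker (a - b)

theorem exists_inner_apply_eq_of_ker_eq {π₁ π₂ : CStarRep A} (hker : π₁.ker = π₂.ker)
    {ξ : π₁.carrier} (hξ : ‖ξ‖ = 1) {e : A} (he : π₁.toFun e = rankOne ℂ ξ ξ) :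
    ∃ η : π₂.carrier, ‖η‖ = 1 ∧ ∀ a, inner ℂ ξ (π₁.toFun a ξ) = inner ℂ η (π₂.toFun a η) := by
  have transfer {a b : A} := (toFun_eq_toFun_iff_of_ker_eq hker (a := a) (b := b)).1
  have hp : IsStarProjection (π₁.toFun e) := he ▸ isStarProjection_rankOne_self hξ
  have hq : IsStarProjection (π₂.toFun e) :=
    { isIdempotentElem := by
        rw [IsIdempotentElem, ← map_mul]
        exact transfer (by rw [map_mul]; exact hp.isIdempotentElem.eq)
      isSelfAdjoint := by
        rw [IsSelfAdjoint, ← map_star]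
        exact transfer (by rw [map_star]; exact hp.isSelfAdjoint.star_eq) }
  have hq_ne : π₂.toFun e ≠ 0 := by
    intro h0
    have : π₁.toFun e = 0 := (hker ▸ h0 : e ∈ π₁.ker)
    rw [he, rankOne_eq_zero, or_self, ← norm_eq_zero, hξ] at this
    exact one_ne_zero this
  have hq_compress (a : A) :
      π₂.toFun e * π₂.toFun a * π₂.toFun e = inner ℂ ξ (π₁.toFun a ξ) • π₂.toFun e := by
    rw [← map_mul, ← map_mul, ← map_smul]
    exact transfer (by rw [map_mul, map_mul, map_smul, he, rankOne_mul_mul_rankOne_s14])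
  obtain ⟨η, hη, hqη⟩ := hq.isIdempotentElem.exists_norm_eq_one_apply_eq hq_ne
  exact ⟨η, hη, fun a ↦
    (inner_apply_eq_of_mul_mul_eq_smul hq.isSelfAdjoint (hq_compress a) hη hqη).symm⟩

end CStarRep

/-- Let `A` be a postliminal C⋆-algebra.  If `π₁` and `π₂` are irreducible
`⋆`-representations of `A` with the same kernel, then they are unitarily equivalent: there is a
unitary `U : H₁ → H₂` with `U π₁(a) U⁻¹ = π₂(a)` for all `a ∈ A`. -/
theorem unitarilyEquivalent_of_ker_eq_of_isPostliminal {A : Type u} [NonUnitalCStarAlgebra A]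
    (hA : IsPostliminal A) (π₁ π₂ : CStarRep A)
    (h₁ : π₁.IsIrreducible) (h₂ : π₂.IsIrreducible) (hker : π₁.ker = π₂.ker) :
    ∃ U : π₁.carrier ≃ₗᵢ[ℂ] π₂.carrier,
      ∀ (a : A) (x : π₁.carrier), U (π₁.toFun a x) = π₂.toFun a (U x) := by
  have := h₁.nontrivial
  obtain ⟨ξ, hξ⟩ := exists_norm_eq π₁.carrier zero_le_one
  obtain ⟨e, he⟩ := hA π₁ h₁ _ (isCompactOperator_rankOne_s14 ξ ξ)
  obtain ⟨η, hη, hstate⟩ := CStarRep.exists_inner_apply_eq_of_ker_eq hker hξ he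
  exact CStarRep.exists_linearIsometryEquiv_intertwining_of_inner_eq
    (h₁.isCyclicVector (norm_ne_zero_iff.1 (hξ ▸ one_ne_zero)))
    (h₂.isCyclicVector (norm_ne_zero_iff.1 (hη ▸ one_ne_zero))) hstate
end

section
/- For a separable infinite-dimensional Hilbert space H, the set K(H) of all compact operators on H is the largest proper closed two-sided ideal in the C*-algebra B(H) of all bounded operators: every proper closed two-sided ideal of B(H) is contained in K(H). -/
/-!
Let `T` be a non-compact operator in a two-sided ideal `J` of `B(H)`, and `A = T⋆T`. Let `f_δ` be
the continuous cut-off that vanishes on `(-∞, δ]`, equals `1` on `[2δ, ∞)` and is linear in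
between. Since `f_δ(t) = t g(t)` with `g` continuous, `f_δ(A) = A g(A) ∈ J`; and
`‖T - T f_δ(A)‖² = ‖(1 - f_δ)(A) A (1 - f_δ)(A)‖ ≤ sup_{t ≥ 0} t (1 - f_δ(t))² ≤ 2δ`.
If every `f_δ(A)` had finite rank, `T` would be a norm limit of finite-rank operators, hence
compact. So some `Q = f_δ(A)` has infinite rank, and `P = f_{δ/2}(A) ∈ J` satisfies `PQ = Q`:
`P` is the identity on the infinite-dimensional closed subspace `M = closure (range Q)`.
Separability of `H` gives a linear isometry `W : H → M`, and then `1 = W⋆ P W ∈ J`, so `J = B(H)`.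
-/

open Filter Topology

theorem Orthonormal.countable {𝕜 E ι : Type*} [RCLike 𝕜] [NormedAddCommGroup E]
    [InnerProductSpace 𝕜 E] [TopologicalSpace.SeparableSpace E] {v : ι → E}
    (hv : Orthonormal 𝕜 v) : Countable ι := by
  have hdist : Pairwise fun i j ↦ 1 ≤ dist (v i) (v j) := by
    intro i j hij
    have h2 : dist (v i) (v j) ^ 2 = 2 := by
      rw [dist_eq_norm, @norm_sub_sq 𝕜, hv.norm_eq_one, hv.norm_eq_one, hv.inner_eq_zero hij]
      norm_num
    nlinarith [dist_nonneg (x := v i) (y := v j)]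
  refine Pairwise.countable_of_isOpen_disjoint (s := fun i ↦ Metric.ball (v i) (1 / 2))
    (fun i j hij ↦ Metric.ball_disjoint_ball ?_) (fun _ ↦ Metric.isOpen_ball)
    (fun i ↦ ⟨v i, Metric.mem_ball_self one_half_pos⟩)
  linarith [hdist hij]

theorem exists_linearIsometry_of_not_finiteDimensional (𝕜 E F : Type*) [RCLike 𝕜]
    [NormedAddCommGroup E] [InnerProductSpace 𝕜 E] [CompleteSpace E]
    [TopologicalSpace.SeparableSpace E] [NormedAddCommGroup F] [InnerProductSpace 𝕜 F]
    [CompleteSpace F] (hF : ¬ FiniteDimensional 𝕜 F) : Nonempty (E →ₗᵢ[𝕜] F) := by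
  obtain ⟨ι, b, -⟩ := exists_hilbertBasis 𝕜 E
  obtain ⟨κ, c, -⟩ := exists_hilbertBasis 𝕜 F
  have : Countable ι := b.orthonormal.countable
  have : Infinite κ := by
    by_contra hfin
    have : Finite κ := not_infinite_iff_finite.mp hfin
    have : Fintype κ := Fintype.ofFinite κ
    exact hF (.of_basis c.toOrthonormalBasis.toBasis)
  let e : ι ↪ κ := (Encodable.ofCountable ι).encode'.trans (Infinite.natEmbedding κ)
  have hce : Orthonormal 𝕜 (c ∘ e) := c.orthonormal.comp e e.injective
  exact ⟨hce.orthogonalFamily.linearIsometry.comp b.repr.toLinearIsometry⟩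

theorem isCompactOperator_of_finiteDimensional_range {𝕜 E F : Type*} [RCLike 𝕜]
    [NormedAddCommGroup E] [NormedSpace 𝕜 E] [NormedAddCommGroup F] [NormedSpace 𝕜 F]
    (T : E →L[𝕜] F) [FiniteDimensional 𝕜 T.range] : IsCompactOperator T :=
  (isCompactOperator_of_locallyCompactSpace_dom
    (T.codRestrict _ T.mem_range_self)).clm_comp T.range.subtypeL

noncomputable def rampCutoff (δ t : ℝ) : ℝ := min 1 (max 0 (t / δ - 1))

section rampCutoff

variable {δ t : ℝ}

@[fun_prop]
theorem continuous_rampCutoff (δ : ℝ) : Continuous (rampCutoff δ) := by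
  unfold rampCutoff; fun_prop

theorem rampCutoff_nonneg : 0 ≤ rampCutoff δ t := le_min zero_le_one (le_max_left _ _)

theorem rampCutoff_le_one : rampCutoff δ t ≤ 1 := min_le_left _ _

theorem rampCutoff_of_le (hδ : 0 < δ) (ht : t ≤ δ) : rampCutoff δ t = 0 := by
  have : t / δ - 1 ≤ 0 := by rw [sub_nonpos, div_le_one hδ]; exact ht
  simp [rampCutoff, max_eq_left this]

theorem rampCutoff_of_two_mul_le (hδ : 0 < δ) (ht : 2 * δ ≤ t) : rampCutoff δ t = 1 := by
  have : 1 ≤ t / δ - 1 := by rw [le_sub_iff_add_le, le_div_iff₀ hδ]; linarith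
  simp [rampCutoff, max_eq_right (zero_le_one.trans this), this]

theorem rampCutoff_half_mul (hδ : 0 < δ) (t : ℝ) :
    rampCutoff (δ / 2) t * rampCutoff δ t = rampCutoff δ t := by
  rcases le_or_gt t δ with ht | ht
  · simp [rampCutoff_of_le hδ ht]
  · rw [rampCutoff_of_two_mul_le (half_pos hδ) (by linarith), one_mul]

theorem mul_rampCutoff_div_max (hδ : 0 < δ) (t : ℝ) :
    t * (rampCutoff δ t / max t δ) = rampCutoff δ t := by
  rcases le_or_gt t δ with ht | ht
  · simp [rampCutoff_of_le hδ ht]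
  · rw [max_eq_left ht.le, mul_div_cancel₀ _ (hδ.trans ht).ne']

theorem mul_one_sub_rampCutoff_sq_le (hδ : 0 < δ) (t : ℝ) :
    t * (1 - rampCutoff δ t) ^ 2 ≤ 2 * δ := by
  rcases le_or_gt (2 * δ) t with h | h
  · simp [rampCutoff_of_two_mul_le hδ h, hδ.le]
  · have h0 := rampCutoff_nonneg (δ := δ) (t := t)
    have h1 := rampCutoff_le_one (δ := δ) (t := t)
    rcases le_or_gt t 0 with ht | ht
    · nlinarith [sq_nonneg (1 - rampCutoff δ t)]
    · have : (1 - rampCutoff δ t) ^ 2 ≤ 1 := by nlinarith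
      nlinarith

end rampCutoff

section CFC

variable {A : Type*} [Ring A] [StarRing A] [TopologicalSpace A] [Algebra ℝ A]
  [ContinuousFunctionalCalculus ℝ A IsSelfAdjoint] {a : A} {δ : ℝ}

theorem cfc_rampCutoff_mem {J : TwoSidedIdeal A} (haJ : a ∈ J) (ha : IsSelfAdjoint a)
    (hδ : 0 < δ) : cfc (rampCutoff δ) a ∈ J := by
  have hmax : ∀ t, max t δ ≠ 0 := fun t ↦ (hδ.trans_le (le_max_right t δ)).ne'
  have hcont : Continuous fun t ↦ rampCutoff δ t / max t δ :=
    (continuous_rampCutoff δ).div (continuous_id.max continuous_const) hmax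
  have : cfc (rampCutoff δ) a = a * cfc (fun t ↦ rampCutoff δ t / max t δ) a := by
    calc cfc (rampCutoff δ) a = cfc (fun t ↦ t * (rampCutoff δ t / max t δ)) a :=
          cfc_congr fun t _ ↦ (mul_rampCutoff_div_max hδ t).symm
      _ = _ := by rw [cfc_mul (fun t ↦ t) _ a (hg := hcont.continuousOn), cfc_id' ℝ a]
  rw [this]
  exact J.mul_mem_right _ _ haJ

theorem cfc_rampCutoff_half_mul (hδ : 0 < δ) :
    cfc (rampCutoff (δ / 2)) a * cfc (rampCutoff δ) a = cfc (rampCutoff δ) a := by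
  rw [← cfc_mul ..]
  exact cfc_congr fun t _ ↦ rampCutoff_half_mul hδ t

end CFC

section CStarAlgebra

variable {A : Type*} [CStarAlgebra A] [PartialOrder A] [StarOrderedRing A]

theorem norm_sub_mul_cfc_rampCutoff_sq_le (x : A) {δ : ℝ} (hδ : 0 < δ) :
    ‖x - x * cfc (rampCutoff δ) (star x * x)‖ ^ 2 ≤ 2 * δ := by
  have hc : x - x * cfc (rampCutoff δ) (star x * x) =
      x * cfc (fun t ↦ 1 - rampCutoff δ t) (star x * x) := by
    rw [cfc_sub (fun _ ↦ 1) (rampCutoff δ) (star x * x), cfc_const_one ℝ (star x * x), mul_sub,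
      mul_one]
  set c := cfc (fun t ↦ 1 - rampCutoff δ t) (star x * x)
  have hstar : star (x * c) * (x * c) =
      cfc (fun t ↦ t * (1 - rampCutoff δ t) ^ 2) (star x * x) := by
    have hc' : star c = c := (cfc_predicate _ _ : IsSelfAdjoint c)
    calc star (x * c) * (x * c) = c * (star x * x * c) := by rw [star_mul, hc']; noncomm_ring
      _ = cfc (fun t ↦ (1 - rampCutoff δ t) * (t * (1 - rampCutoff δ t))) (star x * x) := by
        rw [cfc_mul _ (fun t ↦ t * (1 - rampCutoff δ t)) (star x * x),
          cfc_mul (fun t ↦ t) _ (star x * x), cfc_id' ℝ (star x * x)]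
      _ = _ := cfc_congr fun t _ ↦ by ring
  rw [hc, sq, ← CStarRing.norm_star_mul_self, hstar]
  refine norm_cfc_le (by positivity) fun t ht ↦ ?_
  have ht0 : 0 ≤ t := spectrum_nonneg_of_nonneg (star_mul_self_nonneg x) ht
  rw [Real.norm_of_nonneg (by positivity)]
  exact mul_one_sub_rampCutoff_sq_le hδ t

theorem tendsto_mul_cfc_rampCutoff (x : A) :
    Tendsto (fun δ ↦ x * cfc (rampCutoff δ) (star x * x)) (𝓝[>] 0) (𝓝 x) := by
  rw [tendsto_iff_norm_sub_tendsto_zero]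
  have hsqrt : Tendsto (fun δ : ℝ ↦ √(2 * δ)) (𝓝[>] 0) (𝓝 0) := by
    have : Tendsto (fun δ : ℝ ↦ √(2 * δ)) (𝓝 0) (𝓝 √(2 * 0)) :=
      (by fun_prop : Continuous fun δ : ℝ ↦ √(2 * δ)).tendsto 0
    simpa using this.mono_left nhdsWithin_le_nhds
  refine squeeze_zero' (.of_forall fun _ ↦ norm_nonneg _) ?_ hsqrt
  filter_upwards [self_mem_nhdsWithin] with δ hδ
  rw [norm_sub_rev]
  exact Real.le_sqrt_of_sq_le (norm_sub_mul_cfc_rampCutoff_sq_le x hδ)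

end CStarAlgebra

theorem ContinuousLinearMap.apply_eq_self_of_mem_closure_range {R E : Type*} [Ring R]
    [AddCommGroup E] [Module R E] [TopologicalSpace E] [IsTopologicalAddGroup E]
    [ContinuousConstSMul R E] [T2Space E] {P Q : E →L[R] E} (hPQ : P * Q = Q) {x : E}
    (hx : x ∈ Q.range.topologicalClosure) : P x = x := by
  have hle : Q.range ≤ (P - 1).ker := by
    rintro _ ⟨y, rfl⟩
    simpa [sub_eq_zero] using DFunLike.congr_fun hPQ y
  have := Submodule.topologicalClosure_minimal _ hle (P - 1).isClosed_ker hx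
  simpa [sub_eq_zero] using this

theorem TwoSidedIdeal.one_mem_of_apply_eq_self_of_not_finiteDimensional {𝕜 H : Type*}
    [RCLike 𝕜] [NormedAddCommGroup H] [InnerProductSpace 𝕜 H] [CompleteSpace H]
    [TopologicalSpace.SeparableSpace H] {J : TwoSidedIdeal (H →L[𝕜] H)} {P : H →L[𝕜] H}
    (hP : P ∈ J) {M : Submodule 𝕜 H} [CompleteSpace M] (hM : ¬ FiniteDimensional 𝕜 M)
    (hPM : ∀ x ∈ M, P x = x) : 1 ∈ J := by
  obtain ⟨V⟩ := exists_linearIsometry_of_not_finiteDimensional 𝕜 H M hM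
  let W : H →L[𝕜] H := M.subtypeL ∘L V.toContinuousLinearMap
  have hW : ContinuousLinearMap.adjoint W ∘L W = 1 :=
    (W.norm_map_iff_adjoint_comp_self).mp fun x ↦ V.norm_map x
  have hPW : P * W = W := ContinuousLinearMap.ext fun x ↦ hPM _ (V x).2
  have : 1 = ContinuousLinearMap.adjoint W * P * W := by rw [mul_assoc, hPW]; exact hW.symm
  rw [this]
  exact J.mul_mem_right _ _ (J.mul_mem_left _ _ hP)

noncomputable def compactOperatorIdeal (𝕜 E : Type*) [NontriviallyNormedField 𝕜]
    [NormedAddCommGroup E] [NormedSpace 𝕜 E] : TwoSidedIdeal (E →L[𝕜] E) :=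
  .mk' {T | IsCompactOperator T} isCompactOperator_zero (fun hS hT ↦ hS.add hT)
    (fun hT ↦ hT.neg) (fun {S _} hT ↦ hT.clm_comp S) (fun {_ T} hS ↦ hS.comp_clm T)

section compactOperatorIdeal

variable {𝕜 E : Type*} [NontriviallyNormedField 𝕜] [NormedAddCommGroup E] [NormedSpace 𝕜 E]

theorem coe_compactOperatorIdeal :
    (compactOperatorIdeal 𝕜 E : Set (E →L[𝕜] E)) = {T : E →L[𝕜] E | IsCompactOperator T} :=
  TwoSidedIdeal.coe_mk' ..

theorem isClosed_compactOperatorIdeal [CompleteSpace E] :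
    IsClosed (compactOperatorIdeal 𝕜 E : Set (E →L[𝕜] E)) := by
  rw [coe_compactOperatorIdeal]
  exact isClosed_setOfPred_isCompactOperator

theorem compactOperatorIdeal_ne_top [CompleteSpace 𝕜] (h : ¬ FiniteDimensional 𝕜 E) :
    compactOperatorIdeal 𝕜 E ≠ ⊤ := by
  intro htop
  have h1 : (1 : E →L[𝕜] E) ∈ (compactOperatorIdeal 𝕜 E : Set (E →L[𝕜] E)) := by simp [htop]
  rw [coe_compactOperatorIdeal] at h1
  exact h (.of_isCompactOperator_id (𝕜 := 𝕜) h1)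

end compactOperatorIdeal

theorem TwoSidedIdeal.one_mem_of_not_isCompactOperator {H : Type*} [NormedAddCommGroup H]
    [InnerProductSpace ℂ H] [CompleteSpace H] [TopologicalSpace.SeparableSpace H]
    {J : TwoSidedIdeal (H →L[ℂ] H)} {T : H →L[ℂ] H} (hTJ : T ∈ J)
    (hT : ¬ IsCompactOperator T) : 1 ∈ J := by
  set A := star T * T
  have hA : IsSelfAdjoint A := .star_mul_self T
  have hAJ : A ∈ J := J.mul_mem_left _ _ hTJ
  by_contra h1
  have hfin : ∀ δ > 0, FiniteDimensional ℂ (cfc (rampCutoff δ) A).range := by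
    intro δ hδ
    by_contra hinf
    set M := (cfc (rampCutoff δ) A).range.topologicalClosure
    have : CompleteSpace M := (Submodule.isClosed_topologicalClosure _).completeSpace_coe
    have hP := cfc_rampCutoff_mem hAJ hA (half_pos hδ)
    have hM : ¬ FiniteDimensional ℂ M := fun h ↦
      hinf (Submodule.finiteDimensional_of_le (Submodule.le_topologicalClosure _))
    exact h1 (J.one_mem_of_apply_eq_self_of_not_finiteDimensional hP hM fun x hx ↦
      ContinuousLinearMap.apply_eq_self_of_mem_closure_range (cfc_rampCutoff_half_mul hδ) hx)
  refine hT (isCompactOperator_of_tendsto (tendsto_mul_cfc_rampCutoff T) ?_)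
  filter_upwards [self_mem_nhdsWithin] with δ hδ
  have := hfin δ hδ
  exact (isCompactOperator_of_finiteDimensional_range _).clm_comp T

/-- For a separable infinite-dimensional Hilbert space `H`, the compact
operators `K(H)` form the largest proper closed two-sided ideal of `B(H)`: they form a proper
closed two-sided ideal, and every proper closed two-sided ideal of `B(H)` consists of compact
operators. -/
theorem compactOperators_largest_properClosedTwoSidedIdeal
    {H : Type*} [NormedAddCommGroup H] [InnerProductSpace ℂ H] [CompleteSpace H]
    [TopologicalSpace.SeparableSpace H] (h_infdim : ¬ FiniteDimensional ℂ H) :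
    (∃ K : TwoSidedIdeal (H →L[ℂ] H),
        (K : Set (H →L[ℂ] H)) = {T : H →L[ℂ] H | IsCompactOperator T} ∧
        IsClosed (K : Set (H →L[ℂ] H)) ∧ K ≠ ⊤) ∧
      ∀ J : TwoSidedIdeal (H →L[ℂ] H),
        IsClosed (J : Set (H →L[ℂ] H)) → J ≠ ⊤ →
        ∀ T ∈ J, IsCompactOperator T := by
  refine ⟨⟨compactOperatorIdeal ℂ H, coe_compactOperatorIdeal, isClosed_compactOperatorIdeal,
    compactOperatorIdeal_ne_top h_infdim⟩, fun J _ hJ T hTJ ↦ ?_⟩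
  by_contra hT
  exact hJ ((TwoSidedIdeal.one_mem_iff J).mp (J.one_mem_of_not_isCompactOperator hTJ hT))
end
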